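/- (Flat case with potential: the WDVV equations.) Under the setup of a submanifold with potential of normals with h_{ij}(u) = η_{ij} constant invertible symmetric and g_{ij}(u) = c₀ η_{ij}, c₀ ≠ 0 constant, suppose Φ : U → ℝ is a smooth function such that b^k_{ij}(u) = Σ_s η^{ks} ∂³Φ/∂u^s∂u^i∂u^j(u) for all i,j,k and u ∈ U, where (η^{ks}) is the inverse matrix of (η_{ij}). Then Φ satisfies the Witten–Dijkgraaf–Verlinde–Verlinde associativity equations: Σ_{s,p} (∂³Φ/∂u^i∂u^j∂u^s) η^{sp} (∂³Φ/∂u^p∂u^k∂u^l) = Σ_{s,p} (∂³Φ/∂u^i∂u^k∂u^s) η^{sp} (∂³Φ/∂u^p∂u^j∂u^l) for all indices i,j,k,l and all u ∈ U. -/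

import Mathlib

/-- Partial derivative in the `i`-th coordinate direction. -/
noncomputable def pd {N : ℕ} {E : Type*} [NormedAddCommGroup E] [NormedSpace ℝ E]
    (i : Fin N) (f : (Fin N → ℝ) → E) (u : Fin N → ℝ) : E :=
  fderiv ℝ f u (Pi.single i 1)

/-- The pseudo-Euclidean scalar product `B(x,y) = xᵀ G y` on `ℝ^m`. -/
def Bform {m : ℕ} (G : Matrix (Fin m) (Fin m) ℝ) (x y : Fin m → ℝ) : ℝ :=
  ∑ i, ∑ j, x i * G i j * y j

section AuxLemmas

variable {N : ℕ} {E : Type*} [NormedAddCommGroup E] [NormedSpace ℝ E]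
variable {U : Set (Fin N → ℝ)} {u : Fin N → ℝ}

lemma pd_congr (hU : IsOpen U) {f g : (Fin N → ℝ) → E} (h : ∀ x ∈ U, f x = g x)
    (hu : u ∈ U) (i : Fin N) : pd i f u = pd i g u := by
  unfold pd
  rw [Filter.EventuallyEq.fderiv_eq (Filter.eventuallyEq_of_mem (hU.mem_nhds hu) h)]

lemma pd_const (c : E) (i : Fin N) (u : Fin N → ℝ) : pd i (fun _ => c) u = 0 := by
  simp [pd]

lemma diffAt_of_contDiffOn (hU : IsOpen U) {f : (Fin N → ℝ) → E}
    (hf : ContDiffOn ℝ (⊤ : ℕ∞) f U) (hu : u ∈ U) : DifferentiableAt ℝ f u :=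
  (hf.differentiableOn (by simp)).differentiableAt (hU.mem_nhds hu)

lemma pd_contDiffOn (hU : IsOpen U) {f : (Fin N → ℝ) → E}
    (hf : ContDiffOn ℝ (⊤ : ℕ∞) f U) (i : Fin N) : ContDiffOn ℝ (⊤ : ℕ∞) (pd i f) U := by
  have h1 : ContDiffOn ℝ (⊤ : ℕ∞) (fun x => fderiv ℝ f x) U := hf.fderiv_of_isOpen hU (by simp)
  exact (ContinuousLinearMap.apply ℝ E (Pi.single i 1 : Fin N → ℝ)).contDiff.comp_contDiffOn h1

lemma pd_pd_eq (hU : IsOpen U) {f : (Fin N → ℝ) → E} (hf : ContDiffOn ℝ (⊤ : ℕ∞) f U)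
    (hu : u ∈ U) (i j : Fin N) :
    pd i (pd j f) u = fderiv ℝ (fderiv ℝ f) u (Pi.single i 1) (Pi.single j 1) := by
  have hdf : DifferentiableAt ℝ (fderiv ℝ f) u :=
    diffAt_of_contDiffOn hU (hf.fderiv_of_isOpen hU (by simp)) hu
  have heq : (pd j f) = ⇑(ContinuousLinearMap.apply ℝ E (Pi.single j 1 : Fin N → ℝ)) ∘
      (fderiv ℝ f) := rfl
  unfold pd
  show fderiv ℝ (pd j f) u (Pi.single i 1) = _
  rw [heq, fderiv_comp u
    ((ContinuousLinearMap.apply ℝ E (Pi.single j 1 : Fin N → ℝ)).differentiableAt) hdf]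
  simp

lemma pd_comm (hU : IsOpen U) {f : (Fin N → ℝ) → E} (hf : ContDiffOn ℝ (⊤ : ℕ∞) f U)
    (hu : u ∈ U) (i j : Fin N) : pd i (pd j f) u = pd j (pd i f) u := by
  rw [pd_pd_eq hU hf hu i j, pd_pd_eq hU hf hu j i]
  have hev : ∀ᶠ y in nhds u, HasFDerivAt f (fderiv ℝ f y) y := by
    filter_upwards [hU.mem_nhds hu] with y hy
    exact (diffAt_of_contDiffOn hU hf hy).hasFDerivAt
  have hdf : DifferentiableAt ℝ (fderiv ℝ f) u :=
    diffAt_of_contDiffOn hU (hf.fderiv_of_isOpen hU (by simp)) hu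
  exact second_derivative_symmetric_of_eventually hev hdf.hasFDerivAt _ _

lemma pd_sum {ι : Type*} (s : Finset ι) {f : ι → (Fin N → ℝ) → E}
    (hf : ∀ k ∈ s, DifferentiableAt ℝ (f k) u) (i : Fin N) :
    pd i (fun x => ∑ k ∈ s, f k x) u = ∑ k ∈ s, pd i (f k) u := by
  unfold pd; rw [fderiv_fun_sum hf]; simp

lemma pd_mul {f g : (Fin N → ℝ) → ℝ} (hf : DifferentiableAt ℝ f u)
    (hg : DifferentiableAt ℝ g u) (i : Fin N) :
    pd i (fun x => f x * g x) u = pd i f u * g u + f u * pd i g u := by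
  unfold pd; rw [fderiv_fun_mul hf hg]; simp [mul_comm]; ring

lemma pd_apply {m : ℕ} {f : (Fin N → ℝ) → (Fin m → ℝ)} (hf : DifferentiableAt ℝ f u)
    (i : Fin N) (a : Fin m) : pd i (fun x => f x a) u = pd i f u a := by
  unfold pd
  show fderiv ℝ ((ContinuousLinearMap.proj (R := ℝ) (φ := fun _ : Fin m => ℝ) a) ∘ f) u _ = _
  rw [fderiv_comp u (ContinuousLinearMap.proj a).differentiableAt hf]
  simp

lemma Bform_comm {m : ℕ} {G : Matrix (Fin m) (Fin m) ℝ} (hG : G.transpose = G)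
    (x y : Fin m → ℝ) : Bform G x y = Bform G y x := by
  unfold Bform
  rw [Finset.sum_comm]
  refine Finset.sum_congr rfl fun i _ => Finset.sum_congr rfl fun j _ => ?_
  have h2 : G j i = G i j := by
    have := congrFun (congrFun hG i) j
    simpa [Matrix.transpose_apply] using this
  rw [h2]; ring

lemma Bform_add_left {m : ℕ} {G : Matrix (Fin m) (Fin m) ℝ} (x y z : Fin m → ℝ) :
    Bform G (x + y) z = Bform G x z + Bform G y z := by
  simp [Bform, add_mul, Finset.sum_add_distrib]

lemma Bform_smul_left {m : ℕ} {G : Matrix (Fin m) (Fin m) ℝ} (c : ℝ) (x z : Fin m → ℝ) :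
    Bform G (c • x) z = c * Bform G x z := by
  simp only [Bform, Finset.mul_sum, Pi.smul_apply, smul_eq_mul]
  refine Finset.sum_congr rfl fun i _ => Finset.sum_congr rfl fun j _ => by ring

lemma Bform_sum_left {m : ℕ} {G : Matrix (Fin m) (Fin m) ℝ} {ι : Type*}
    (s : Finset ι) (v : ι → Fin m → ℝ) (z : Fin m → ℝ) :
    Bform G (∑ k ∈ s, v k) z = ∑ k ∈ s, Bform G (v k) z := by
  classical
  induction s using Finset.induction with
  | empty => simp [Bform]
  | insert _ _ h ih => rw [Finset.sum_insert h, Bform_add_left, ih, Finset.sum_insert h]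

lemma pd_Bform {m : ℕ} (G : Matrix (Fin m) (Fin m) ℝ)
    {f g : (Fin N → ℝ) → (Fin m → ℝ)}
    (hf : DifferentiableAt ℝ f u) (hg : DifferentiableAt ℝ g u) (k : Fin N) :
    pd k (fun x => Bform G (f x) (g x)) u =
      Bform G (pd k f u) (g u) + Bform G (f u) (pd k g u) := by
  have hfa : ∀ a : Fin m, DifferentiableAt ℝ (fun x => f x a) u :=
    fun a => (differentiableAt_pi.1 hf a)
  have hga : ∀ a : Fin m, DifferentiableAt ℝ (fun x => g x a) u :=
    fun a => (differentiableAt_pi.1 hg a)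
  have key : pd k (fun x => ∑ a, ∑ c, f x a * G a c * g x c) u
      = ∑ a, ∑ c, (pd k f u a * G a c * g u c + f u a * G a c * pd k g u c) := by
    rw [pd_sum _ (fun a _ => by
      exact DifferentiableAt.fun_sum fun c _ => ((hfa a).fun_mul (differentiableAt_const _)).fun_mul (hga c))]
    refine Finset.sum_congr rfl fun a _ => ?_
    rw [pd_sum _ (fun c _ => ((hfa a).fun_mul (differentiableAt_const _)).fun_mul (hga c))]
    refine Finset.sum_congr rfl fun c _ => ?_
    rw [pd_mul ((hfa a).fun_mul (differentiableAt_const _)) (hga c),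
        pd_mul (hfa a) (differentiableAt_const _), pd_apply hf, pd_apply hg, pd_const]
    ring
  unfold Bform
  rw [key]
  simp [Finset.sum_add_distrib]

end AuxLemmas
/-- `X^k_{ij}` is written `X i j k`. -/
theorem stmt18
    (N : ℕ) (hN : 1 ≤ N)
    (G : Matrix (Fin (2 * N)) (Fin (2 * N)) ℝ)
    (hGsymm : G.transpose = G) (hGdet : G.det ≠ 0)
    (U : Set (Fin N → ℝ)) (hU : IsOpen U)
    (r n : (Fin N → ℝ) → (Fin (2 * N) → ℝ))
    (hr : ContDiffOn ℝ (⊤ : ℕ∞) r U) (hn : ContDiffOn ℝ (⊤ : ℕ∞) n U)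
    (hbasis : ∀ u ∈ U,
      LinearIndependent ℝ (Sum.elim (fun i : Fin N => pd i r u) (fun j : Fin N => pd j n u)) ∧
      Submodule.span ℝ
        (Set.range (Sum.elim (fun i : Fin N => pd i r u) (fun j : Fin N => pd j n u))) = ⊤)
    (horth : ∀ u ∈ U, ∀ i j : Fin N, Bform G (pd i r u) (pd j n u) = 0)
    -- flatness: h = η constant symmetric invertible, g = c₀ η
    (η : Matrix (Fin N) (Fin N) ℝ) (hηsymm : η.transpose = η) (hηdet : η.det ≠ 0)
    (c₀ : ℝ) (hc₀ : c₀ ≠ 0)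
    (hflat_h : ∀ u ∈ U, ∀ i j : Fin N, Bform G (pd i n u) (pd j n u) = η i j)
    (hflat_g : ∀ u ∈ U, ∀ i j : Fin N, Bform G (pd i r u) (pd j r u) = c₀ * η i j)
    (a b c d : Fin N → Fin N → Fin N → (Fin N → ℝ) → ℝ)
    (hsmooth : ∀ i j k : Fin N,
      ContDiffOn ℝ (⊤ : ℕ∞) (a i j k) U ∧ ContDiffOn ℝ (⊤ : ℕ∞) (b i j k) U ∧
      ContDiffOn ℝ (⊤ : ℕ∞) (c i j k) U ∧ ContDiffOn ℝ (⊤ : ℕ∞) (d i j k) U)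
    (hGauss : ∀ u ∈ U, ∀ i j : Fin N,
      pd i (pd j r) u =
        (∑ k, a i j k u • pd k r u) + ∑ k, b i j k u • pd k n u)
    (hWeingarten : ∀ u ∈ U, ∀ i j : Fin N,
      pd i (pd j n) u =
        (∑ k, c i j k u • pd k r u) + ∑ k, d i j k u • pd k n u)
    -- Φ is a potential for b: `b^k_{ij} = Σ_s η^{ks} ∂³Φ/∂uˢ∂uⁱ∂uʲ`
    (Φ : (Fin N → ℝ) → ℝ) (hΦ : ContDiffOn ℝ (⊤ : ℕ∞) Φ U)
    (hbΦ : ∀ u ∈ U, ∀ i j k : Fin N,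
      b i j k u = ∑ s, η⁻¹ k s * pd s (pd i (pd j Φ)) u) :
    -- the WDVV associativity equations
    ∀ u ∈ U, ∀ i j k l : Fin N,
      ∑ s, ∑ p, pd i (pd j (pd s Φ)) u * η⁻¹ s p * pd p (pd k (pd l Φ)) u =
      ∑ s, ∑ p, pd i (pd k (pd s Φ)) u * η⁻¹ s p * pd p (pd j (pd l Φ)) u := by
  -- differentiability facts
  have hr1d : ∀ u ∈ U, ∀ i : Fin N, DifferentiableAt ℝ (pd i r) u :=
    fun u hu i => diffAt_of_contDiffOn hU (pd_contDiffOn hU hr i) hu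
  have hr2d : ∀ u ∈ U, ∀ i j : Fin N, DifferentiableAt ℝ (pd i (pd j r)) u :=
    fun u hu i j => diffAt_of_contDiffOn hU (pd_contDiffOn hU (pd_contDiffOn hU hr j) i) hu
  -- symmetry of η
  have hηsym' : ∀ p q : Fin N, η p q = η q p := fun p q => by
    have := congrFun (congrFun hηsymm q) p
    simpa [Matrix.transpose_apply] using this
  have hη : η * η⁻¹ = 1 := Matrix.mul_nonsing_inv η (isUnit_iff_ne_zero.mpr hηdet)
  -- full symmetry (cyclic) of third derivatives of Φ
  have cyc : ∀ u ∈ U, ∀ p q s : Fin N,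
      pd p (pd q (pd s Φ)) u = pd s (pd p (pd q Φ)) u := by
    intro u hu p q s
    have s23 : pd p (pd q (pd s Φ)) u = pd p (pd s (pd q Φ)) u :=
      pd_congr hU (fun w hw => pd_comm hU hΦ hw q s) hu p
    have s12 : pd p (pd s (pd q Φ)) u = pd s (pd p (pd q Φ)) u :=
      pd_comm hU (pd_contDiffOn hU hΦ q) hu p s
    rw [s23, s12]
  -- Step A: B(∂i∂j r, ∂l n) = Φ_{lij}
  have hA : ∀ u ∈ U, ∀ i j l : Fin N,
      Bform G (pd i (pd j r) u) (pd l n u) = pd l (pd i (pd j Φ)) u := by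
    intro u hu i j l
    rw [hGauss u hu i j, Bform_add_left, Bform_sum_left, Bform_sum_left]
    have e1 : ∀ k : Fin N, Bform G (a i j k u • pd k r u) (pd l n u) = 0 := fun k => by
      rw [Bform_smul_left, horth u hu k l, mul_zero]
    have e2 : ∀ k : Fin N,
        Bform G (b i j k u • pd k n u) (pd l n u) = b i j k u * η k l := fun k => by
      rw [Bform_smul_left, hflat_h u hu k l]
    rw [Finset.sum_congr rfl (fun k _ => e1 k), Finset.sum_congr rfl (fun k _ => e2 k)]
    simp only [Finset.sum_const_zero, zero_add]
    calc (∑ k, b i j k u * η k l)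
        = ∑ k, ∑ s, η l k * η⁻¹ k s * pd s (pd i (pd j Φ)) u := by
          refine Finset.sum_congr rfl fun k _ => ?_
          rw [hbΦ u hu i j k, Finset.sum_mul]
          exact Finset.sum_congr rfl fun s _ => by rw [hηsym' k l]; ring
      _ = ∑ s, (∑ k, η l k * η⁻¹ k s) * pd s (pd i (pd j Φ)) u := by
          rw [Finset.sum_comm]
          exact Finset.sum_congr rfl fun s _ => by rw [Finset.sum_mul]
      _ = ∑ s, (1 : Matrix (Fin N) (Fin N) ℝ) l s * pd s (pd i (pd j Φ)) u := by
          refine Finset.sum_congr rfl fun s _ => ?_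
          rw [← Matrix.mul_apply, hη]
      _ = pd l (pd i (pd j Φ)) u := by
          simp [Matrix.one_apply]
  -- antisymmetry from differentiating the constant metric g
  have hPa : ∀ u ∈ U, ∀ k i l : Fin N,
      Bform G (pd k (pd i r) u) (pd l r u) = - Bform G (pd k (pd l r) u) (pd i r u) := by
    intro u hu k i l
    have h0 : pd k (fun x => Bform G (pd i r x) (pd l r x)) u = 0 := by
      rw [pd_congr hU (fun x hx => hflat_g x hx i l) hu, pd_const]
    rw [pd_Bform G (hr1d u hu i) (hr1d u hu l) k] at h0
    rw [Bform_comm hGsymm (pd i r u)] at h0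
    linarith
  -- P = 0 : B(∂i∂j r, ∂l r) = 0
  have hP0 : ∀ u ∈ U, ∀ i j l : Fin N, Bform G (pd i (pd j r) u) (pd l r u) = 0 := by
    intro u hu i j l
    have hs : ∀ p q s : Fin N,
        Bform G (pd p (pd q r) u) (pd s r u) = Bform G (pd q (pd p r) u) (pd s r u) :=
      fun p q s => by rw [pd_comm hU hr hu p q]
    have key : Bform G (pd i (pd j r) u) (pd l r u)
        = - Bform G (pd i (pd j r) u) (pd l r u) := by
      calc Bform G (pd i (pd j r) u) (pd l r u)
          = - Bform G (pd i (pd l r) u) (pd j r u) := hPa u hu i j l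
        _ = - Bform G (pd l (pd i r) u) (pd j r u) := by rw [hs i l j]
        _ = Bform G (pd l (pd j r) u) (pd i r u) := by rw [hPa u hu l i j, neg_neg]
        _ = Bform G (pd j (pd l r) u) (pd i r u) := by rw [hs l j i]
        _ = - Bform G (pd j (pd i r) u) (pd l r u) := hPa u hu j l i
        _ = - Bform G (pd i (pd j r) u) (pd l r u) := by rw [hs j i l]
    linarith
  -- differentiating P = 0
  have hT : ∀ u ∈ U, ∀ k i j l : Fin N,
      Bform G (pd i (pd j r) u) (pd k (pd l r) u)
        = - Bform G (pd k (pd i (pd j r)) u) (pd l r u) := by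
    intro u hu k i j l
    have h0 : pd k (fun x => Bform G (pd i (pd j r) x) (pd l r x)) u = 0 := by
      rw [pd_congr hU (fun x hx => hP0 x hx i j l) hu, pd_const]
    rw [pd_Bform G (hr2d u hu i j) (hr1d u hu l) k] at h0
    linarith
  -- full symmetry of third derivatives of r : swap of outer and inner index
  have hTsym : ∀ u ∈ U, ∀ k i j : Fin N,
      pd k (pd i (pd j r)) u = pd j (pd i (pd k r)) u := by
    intro u hu k i j
    have s12 : ∀ p q s : Fin N, pd p (pd q (pd s r)) u = pd q (pd p (pd s r)) u :=
      fun p q s => pd_comm hU (pd_contDiffOn hU hr s) hu p q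
    have s23 : ∀ p q s : Fin N, pd p (pd q (pd s r)) u = pd p (pd s (pd q r)) u :=
      fun p q s => pd_congr hU (fun w hw => pd_comm hU hr hw q s) hu p
    rw [s12 k i j, s23 i k j, s12 i j k]
  -- symmetry of M(i,j,k,l) in j ↔ k
  have hMsym : ∀ u ∈ U, ∀ i j k l : Fin N,
      Bform G (pd i (pd j r) u) (pd k (pd l r) u)
        = Bform G (pd i (pd k r) u) (pd j (pd l r) u) := by
    intro u hu i j k l
    rw [hT u hu k i j l, hT u hu j i k l, hTsym u hu k i j]
  -- expansion of M via the Gauss equation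
  have hMexp : ∀ u ∈ U, ∀ i j k l : Fin N,
      Bform G (pd i (pd j r) u) (pd k (pd l r) u)
        = ∑ m, b k l m u * pd m (pd i (pd j Φ)) u := by
    intro u hu i j k l
    rw [Bform_comm hGsymm, hGauss u hu k l, Bform_add_left, Bform_sum_left, Bform_sum_left]
    have e1 : ∀ m : Fin N, Bform G (a k l m u • pd m r u) (pd i (pd j r) u) = 0 := fun m => by
      rw [Bform_smul_left, Bform_comm hGsymm, hP0 u hu i j m, mul_zero]
    have e2 : ∀ m : Fin N, Bform G (b k l m u • pd m n u) (pd i (pd j r) u)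
        = b k l m u * pd m (pd i (pd j Φ)) u := fun m => by
      rw [Bform_smul_left, Bform_comm hGsymm, hA u hu i j m]
    rw [Finset.sum_congr rfl (fun m _ => e1 m), Finset.sum_congr rfl (fun m _ => e2 m)]
    simp
  -- the WDVV sums equal M
  have hWDVV : ∀ u ∈ U, ∀ i j k l : Fin N,
      ∑ s, ∑ p, pd i (pd j (pd s Φ)) u * η⁻¹ s p * pd p (pd k (pd l Φ)) u
        = Bform G (pd i (pd j r) u) (pd k (pd l r) u) := by
    intro u hu i j k l
    rw [hMexp u hu i j k l]
    refine Finset.sum_congr rfl fun s _ => ?_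
    rw [hbΦ u hu k l s, Finset.sum_mul]
    refine Finset.sum_congr rfl fun p _ => ?_
    rw [cyc u hu i j s]
    ring
  intro u hu i j k l
  rw [hWDVV u hu i j k l, hWDVV u hu i k j l, hMsym u hu i j k l]
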